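/- Let g : [xL, xR] → [xL, xR] and f : [x̄L, x̄R] → [x̄L, x̄R] be increasing homeomorphisms with g(x) < x on (xL, xR), f(x) > x on (x̄L, x̄R), and whose only fixed points are the endpoints. Then there exists a (decreasing) homeomorphism h : [x̄L, x̄R] → [xL, xR] with g ∘ h = h ∘ f. -/

import Mathlib

/-!
Read in the reversed order, `g` pushes every point of `(xL, xR)` up, just as `f` does on
`(x̄L, x̄R)`. An order automorphism `φ` of `ℝ` with `x < φ x` is conjugate to `t ↦ t + 1`: spread
the affine parametrisation `[0, 1) → [0, φ 0)` of a fundamental domain along the `ℤ`-orbits,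
which sweep out all of `ℝ` because the supremum of a bounded orbit would be a fixed point.
Transporting this to both open intervals and composing gives an order-reversing conjugacy;
sending the endpoints to each other completes it, and a monotone bijection between closed
intervals is continuous.
-/

open Set

theorem AntitoneOn.continuousOn_of_surjOn {α β : Type*} [LinearOrder α] [TopologicalSpace α]
    [OrderTopology α] [LinearOrder β] [TopologicalSpace β] [OrderTopology β] [DenselyOrdered β]
    {f : α → β} {s : Set α} {t : Set β} [s.OrdConnected] [t.OrdConnected]
    (hf : AntitoneOn f s) (hmaps : MapsTo f s t) (hsurj : SurjOn f s t) : ContinuousOn f s := by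
  let g : s → tᵒᵈ := fun x => OrderDual.toDual ⟨f x, hmaps x.2⟩
  have hg : Continuous g := by
    refine Monotone.continuous_of_surjective (fun x y hxy => hf x.2 y.2 hxy) fun y => ?_
    obtain ⟨x, hx, hxy⟩ := hsurj (OrderDual.ofDual y).2
    exact ⟨⟨x, hx⟩, Subtype.ext hxy⟩
  exact continuousOn_iff_continuous_domRestrict.2
    (continuous_subtype_val.comp (continuous_ofDual.comp hg))

namespace OrderIso

section Orbit

variable {α : Type*}

theorem zpow_add_one_apply [LE α] (φ : α ≃o α) (n : ℤ) (x : α) :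
    (φ ^ (n + 1)) x = φ ((φ ^ n) x) := by
  rw [add_comm, zpow_one_add]; rfl

theorem zpow_neg_apply_zpow_apply [LE α] (φ : α ≃o α) (n : ℤ) (x : α) :
    (φ ^ (-n)) ((φ ^ n) x) = x := by
  rw [← RelIso.mul_apply, ← zpow_add, neg_add_cancel, zpow_zero]; rfl

theorem strictMono_zpow_apply [Preorder α] {φ : α ≃o α} (hφ : ∀ x, x < φ x) (x : α) :
    StrictMono fun n : ℤ => (φ ^ n) x :=
  strictMono_int_of_lt_succ fun n => by
    simpa only [zpow_add_one_apply] using hφ _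

variable [ConditionallyCompleteLinearOrder α] {φ : α ≃o α}

theorem exists_lt_zpow_apply (hφ : ∀ x, x < φ x) (x y : α) : ∃ n : ℤ, x < (φ ^ n) y := by
  by_contra! hle
  have hbdd : BddAbove (range fun n : ℤ => (φ ^ n) y) :=
    ⟨x, by rintro _ ⟨n, rfl⟩; exact hle n⟩
  have hfix : φ (⨆ n : ℤ, (φ ^ n) y) = ⨆ n : ℤ, (φ ^ n) y := by
    rw [φ.map_ciSup hbdd]
    simp only [← zpow_add_one_apply]
    exact (Equiv.addRight (1 : ℤ)).iSup_comp (g := fun n => (φ ^ n) y)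
  exact (hφ _).ne' hfix

theorem exists_zpow_apply_mem_Ico (hφ : ∀ x, x < φ x) (a x : α) :
    ∃ n : ℤ, (φ ^ n) x ∈ Ico a (φ a) := by
  obtain ⟨m, hm⟩ := exists_lt_zpow_apply hφ x (φ a)
  obtain ⟨N, hN⟩ := exists_lt_zpow_apply hφ (φ a) x
  obtain ⟨n, hn, hmax⟩ := Int.exists_greatest_of_bdd (P := fun n => (φ ^ n) x < φ a)
    ⟨N, fun n hn => ((strictMono_zpow_apply hφ x).lt_iff_lt.1 (hn.trans hN)).le⟩
    ⟨-m, by simpa only [zpow_neg_apply_zpow_apply] using (φ ^ (-m)).strictMono hm⟩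
  refine ⟨n, φ.le_iff_le.1 ?_, hn⟩
  rw [← zpow_add_one_apply]
  exact not_lt.1 fun h => (hmax (n + 1) h).not_gt (lt_add_one n)

end Orbit

noncomputable def translationConj (φ : ℝ ≃o ℝ) (t : ℝ) : ℝ := (φ ^ ⌊t⌋) (Int.fract t * φ 0)

section Real

variable {φ : ℝ ≃o ℝ}

theorem translationConj_add_one (t : ℝ) :
    translationConj φ (t + 1) = φ (translationConj φ t) := by
  simp only [translationConj, Int.floor_add_one, Int.fract_add_one, zpow_add_one_apply]

theorem translationConj_mem_Ico (hφ : 0 < φ 0) (t : ℝ) :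
    translationConj φ t ∈ Ico ((φ ^ ⌊t⌋) 0) ((φ ^ (⌊t⌋ + 1)) 0) := by
  rw [zpow_add_one, RelIso.mul_apply]
  exact ⟨(φ ^ ⌊t⌋).monotone (mul_nonneg (Int.fract_nonneg t) hφ.le),
    (φ ^ ⌊t⌋).strictMono (mul_lt_of_lt_one_left hφ (Int.fract_lt_one t))⟩

theorem strictMono_translationConj (hφ : ∀ x, x < φ x) : StrictMono (translationConj φ) := by
  intro t u htu
  rcases (Int.floor_mono htu.le).eq_or_lt with heq | hlt
  · have hfract : Int.fract t < Int.fract u := by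
      rw [Int.fract, Int.fract, heq]; linarith
    simp only [translationConj, heq]
    exact (φ ^ ⌊u⌋).strictMono (mul_lt_mul_of_pos_right hfract (hφ 0))
  · calc translationConj φ t < (φ ^ (⌊t⌋ + 1)) 0 := (translationConj_mem_Ico (hφ 0) t).2
      _ ≤ (φ ^ ⌊u⌋) 0 := (strictMono_zpow_apply hφ 0).monotone hlt
      _ ≤ translationConj φ u := (translationConj_mem_Ico (hφ 0) u).1

theorem surjective_translationConj (hφ : ∀ x, x < φ x) :
    Function.Surjective (translationConj φ) := by
  intro x
  obtain ⟨n, hn0, hn1⟩ := exists_zpow_apply_mem_Ico hφ 0 x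
  have hφ0 : 0 < φ 0 := hφ 0
  have hmem : (φ ^ n) x / φ 0 ∈ Ico (0 : ℝ) 1 :=
    ⟨div_nonneg hn0 hφ0.le, (div_lt_one hφ0).2 hn1⟩
  refine ⟨((-n : ℤ) : ℝ) + (φ ^ n) x / φ 0, ?_⟩
  rw [translationConj, Int.floor_intCast_add, Int.fract_intCast_add, Int.fract_eq_self.2 hmem,
    Int.floor_eq_zero_iff.2 hmem, add_zero, div_mul_cancel₀ _ hφ0.ne',
    zpow_neg_apply_zpow_apply]

end Real

theorem exists_conj_add_one {α : Type*} [LinearOrder α] (e : ℝ ≃o α) (φ : α ≃o α)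
    (hφ : ∀ x, x < φ x) : ∃ σ : ℝ ≃o α, ∀ t, σ (t + 1) = φ (σ t) := by
  set ψ : ℝ ≃o ℝ := e.trans (φ.trans e.symm)
  have hψ : ∀ x, x < ψ x := fun x => e.lt_iff_lt.1 (by simpa [ψ] using hφ (e x))
  refine ⟨(StrictMono.orderIsoOfSurjective _ (strictMono_translationConj hψ)
    (surjective_translationConj hψ)).trans e, fun t => ?_⟩
  simp [translationConj_add_one, ψ]

theorem exists_conj_of_lt_apply {α β : Type*} [LinearOrder α] [LinearOrder β] (eα : ℝ ≃o α)
    (eβ : ℝ ≃o β) (φ : α ≃o α) (ψ : β ≃o β) (hφ : ∀ x, x < φ x) (hψ : ∀ y, y < ψ y) :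
    ∃ κ : α ≃o β, ∀ x, κ (φ x) = ψ (κ x) := by
  obtain ⟨σ, hσ⟩ := exists_conj_add_one eα φ hφ
  obtain ⟨τ, hτ⟩ := exists_conj_add_one eβ ψ hψ
  refine ⟨σ.symm.trans τ, fun x => ?_⟩
  obtain ⟨t, rfl⟩ := σ.surjective x
  simp [← hσ, hτ]

end OrderIso

section Interval

variable {α β : Type*} [LinearOrder α] [LinearOrder β] {f : α → β} {p q : α} {r s : β}

theorem MonotoneOn.apply_left_eq_of_surjOn (hf : MonotoneOn f (Icc p q))
    (hmaps : MapsTo f (Icc p q) (Icc r s)) (hsurj : SurjOn f (Icc p q) (Icc r s)) (hrs : r ≤ s) :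
    f p = r := by
  obtain ⟨z, hz, hfz⟩ := hsurj (left_mem_Icc.2 hrs)
  have hp : p ∈ Icc p q := left_mem_Icc.2 (hz.1.trans hz.2)
  exact le_antisymm (hfz ▸ hf hp hz hz.1) (hmaps hp).1

theorem MonotoneOn.apply_right_eq_of_surjOn (hf : MonotoneOn f (Icc p q))
    (hmaps : MapsTo f (Icc p q) (Icc r s)) (hsurj : SurjOn f (Icc p q) (Icc r s)) (hrs : r ≤ s) :
    f q = s := by
  obtain ⟨z, hz, hfz⟩ := hsurj (right_mem_Icc.2 hrs)
  have hq : q ∈ Icc p q := right_mem_Icc.2 (hz.1.trans hz.2)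
  exact le_antisymm (hmaps hq).2 (hfz ▸ hf hz hq hz.2)

theorem StrictMonoOn.bijOn_Ioo_of_bijOn_Icc (hf : StrictMonoOn f (Icc p q))
    (hb : BijOn f (Icc p q) (Icc r s)) : BijOn f (Ioo p q) (Ioo r s) := by
  refine ⟨fun x hx => ?_, hf.injOn.mono Ioo_subset_Icc_self, fun y hy => ?_⟩
  · have hp : p ∈ Icc p q := left_mem_Icc.2 (hx.1.trans hx.2).le
    have hq : q ∈ Icc p q := right_mem_Icc.2 (hx.1.trans hx.2).le
    exact ⟨(hb.mapsTo hp).1.trans_lt (hf hp (Ioo_subset_Icc_self hx) hx.1),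
      (hf (Ioo_subset_Icc_self hx) hq hx.2).trans_le (hb.mapsTo hq).2⟩
  · obtain ⟨x, hx, rfl⟩ := hb.surjOn (Ioo_subset_Icc_self hy)
    have hrs : r ≤ s := (hy.1.trans hy.2).le
    have hfp := hf.monotoneOn.apply_left_eq_of_surjOn hb.mapsTo hb.surjOn hrs
    have hfq := hf.monotoneOn.apply_right_eq_of_surjOn hb.mapsTo hb.surjOn hrs
    refine ⟨x, ⟨hx.1.lt_of_ne ?_, hx.2.lt_of_ne ?_⟩, rfl⟩
    · rintro rfl; exact hy.1.ne' hfp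
    · rintro rfl; exact hy.2.ne hfq

noncomputable def StrictMonoOn.orderIsoOfBijOn {s : Set α} {t : Set β} (hf : StrictMonoOn f s)
    (hb : BijOn f s t) : s ≃o t :=
  (hf.orderIso f s).trans (OrderIso.setCongr _ _ hb.image_eq)

end Interval

theorem nonempty_orderIso_real_Ioo {a b : ℝ} (hab : a < b) : Nonempty (ℝ ≃o Ioo a b) := by
  let e := orderIsoIooNegOneOne ℝ
  have hmem : ∀ u ∈ Ioo (-1 : ℝ) 1, (a + b) / 2 + (b - a) / 2 * u ∈ Ioo a b := fun u hu =>
    ⟨by nlinarith [hu.1], by nlinarith [hu.2]⟩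
  refine ⟨StrictMono.orderIsoOfSurjective (fun t => ⟨_, hmem _ (e t).2⟩)
    (fun t u htu => ?_) ?_⟩
  · have : ((e t : Ioo (-1 : ℝ) 1) : ℝ) < e u := e.strictMono htu
    show (a + b) / 2 + (b - a) / 2 * (e t : ℝ) < (a + b) / 2 + (b - a) / 2 * (e u : ℝ)
    nlinarith
  · rintro ⟨x, hx⟩
    have hu : (2 * x - a - b) / (b - a) ∈ Ioo (-1 : ℝ) 1 := by
      rw [mem_Ioo, lt_div_iff₀ (by linarith), div_lt_iff₀ (by linarith)]
      exact ⟨by linarith [hx.1], by linarith [hx.2]⟩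
    refine ⟨e.symm ⟨_, hu⟩, Subtype.ext ?_⟩
    simp only [OrderIso.apply_symm_apply]
    field_simp [(sub_pos.2 hab).ne']
    ring

namespace Set.Ioo

variable {α β : Type*} [LinearOrder α] [LinearOrder β] {p q : α} {r s : β}
  (K : Ioo p q ≃o (Ioo r s)ᵒᵈ)

noncomputable def antiExtend (x : α) : β :=
  if hx : x ∈ Ioo p q then ((OrderDual.ofDual (K ⟨x, hx⟩) : Ioo r s) : β)
  else if x ≤ p then s else r

theorem antiExtend_of_mem {x : α} (hx : x ∈ Ioo p q) :
    antiExtend K x = ((OrderDual.ofDual (K ⟨x, hx⟩) : Ioo r s) : β) :=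
  dif_pos hx

theorem antiExtend_mem_Ioo {x : α} (hx : x ∈ Ioo p q) : antiExtend K x ∈ Ioo r s := by
  rw [antiExtend_of_mem K hx]
  exact Subtype.prop _

theorem antiExtend_left : antiExtend K p = s := by
  simp [antiExtend]

theorem antiExtend_right (hpq : p < q) : antiExtend K q = r := by
  simp [antiExtend, hpq]

theorem strictAntiOn_antiExtend (hpq : p < q) (hrs : r < s) :
    StrictAntiOn (antiExtend K) (Icc p q) := by
  intro x hx y hy hxy
  have hx' : x = p ∨ x ∈ Ioo p q := hx.1.eq_or_lt.imp Eq.symm fun h => ⟨h, hxy.trans_le hy.2⟩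
  have hy' : y = q ∨ y ∈ Ioo p q := hy.2.eq_or_lt.imp id fun h => ⟨hx.1.trans_lt hxy, h⟩
  rcases hx' with rfl | hx' <;> rcases hy' with rfl | hy'
  · rwa [antiExtend_left, antiExtend_right K hpq]
  · rw [antiExtend_left]; exact (antiExtend_mem_Ioo K hy').2
  · rw [antiExtend_right K hpq]; exact (antiExtend_mem_Ioo K hx').1
  · rw [antiExtend_of_mem K hx', antiExtend_of_mem K hy']
    exact K.strictMono (show (⟨x, hx'⟩ : Ioo p q) < ⟨y, hy'⟩ from hxy)

theorem bijOn_antiExtend (hpq : p < q) (hrs : r < s) :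
    BijOn (antiExtend K) (Icc p q) (Icc r s) := by
  refine ⟨fun x hx => ?_, (strictAntiOn_antiExtend K hpq hrs).injOn, fun y hy => ?_⟩
  · rcases eq_endpoints_or_mem_Ioo_of_mem_Icc hx with rfl | rfl | hx'
    · rw [antiExtend_left]; exact right_mem_Icc.2 hrs.le
    · rw [antiExtend_right K hpq]; exact left_mem_Icc.2 hrs.le
    · exact Ioo_subset_Icc_self (antiExtend_mem_Ioo K hx')
  · rcases eq_endpoints_or_mem_Ioo_of_mem_Icc hy with rfl | rfl | hy'
    · exact ⟨q, right_mem_Icc.2 hpq.le, antiExtend_right K hpq⟩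
    · exact ⟨p, left_mem_Icc.2 hpq.le, antiExtend_left K⟩
    · set x := K.symm (OrderDual.toDual ⟨y, hy'⟩)
      exact ⟨x, Ioo_subset_Icc_self x.2, by simp [antiExtend_of_mem K x.2, x]⟩

end Set.Ioo

theorem stmt_5_general
    (f g : ℝ → ℝ) (xL xR xbL xbR : ℝ)
    (hI : xL < xR) (hJ : xbL < xbR)
    (hgm : StrictMonoOn g (Icc xL xR))
    (hgB : BijOn g (Icc xL xR) (Icc xL xR))
    (hfm : StrictMonoOn f (Icc xbL xbR))
    (hfB : BijOn f (Icc xbL xbR) (Icc xbL xbR))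
    (hgd : ∀ x ∈ Ioo xL xR, g x < x)
    (hfd : ∀ x ∈ Ioo xbL xbR, x < f x) :
    ∃ h : ℝ → ℝ, ContinuousOn h (Icc xbL xbR) ∧ StrictAntiOn h (Icc xbL xbR) ∧
      BijOn h (Icc xbL xbR) (Icc xL xR) ∧
      ∀ x ∈ Icc xbL xbR, g (h x) = h (f x) := by
  obtain ⟨θf⟩ := nonempty_orderIso_real_Ioo hJ
  obtain ⟨θg⟩ := nonempty_orderIso_real_Ioo hI
  let F := (hfm.mono Ioo_subset_Icc_self).orderIsoOfBijOn (hfm.bijOn_Ioo_of_bijOn_Icc hfB)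
  let G := (hgm.mono Ioo_subset_Icc_self).orderIsoOfBijOn (hgm.bijOn_Ioo_of_bijOn_Icc hgB)
  obtain ⟨K, hK⟩ := OrderIso.exists_conj_of_lt_apply θf ((OrderIso.neg ℝ).trans θg.dual)
    F G.dual (fun x => hfd x x.2) (fun y => hgd _ (OrderDual.ofDual y).2)
  have hanti := Ioo.strictAntiOn_antiExtend K hJ hI
  have hbij := Ioo.bijOn_antiExtend K hJ hI
  refine ⟨Ioo.antiExtend K, hanti.antitoneOn.continuousOn_of_surjOn hbij.mapsTo hbij.surjOn,
    hanti, hbij, fun x hx => ?_⟩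
  rcases eq_endpoints_or_mem_Ioo_of_mem_Icc hx with rfl | rfl | hx
  · rw [hfm.monotoneOn.apply_left_eq_of_surjOn hfB.mapsTo hfB.surjOn hJ.le, Ioo.antiExtend_left,
      hgm.monotoneOn.apply_right_eq_of_surjOn hgB.mapsTo hgB.surjOn hI.le]
  · rw [hfm.monotoneOn.apply_right_eq_of_surjOn hfB.mapsTo hfB.surjOn hJ.le,
      Ioo.antiExtend_right K hJ,
      hgm.monotoneOn.apply_left_eq_of_surjOn hgB.mapsTo hgB.surjOn hI.le]
  · have hfx : f x ∈ Ioo xbL xbR := (F ⟨x, hx⟩).2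
    rw [Ioo.antiExtend_of_mem K hx, Ioo.antiExtend_of_mem K hfx]
    exact congrArg Subtype.val (congrArg OrderDual.ofDual (hK ⟨x, hx⟩)).symm

/-- an increasing homeomorphism below the diagonal and one above the
diagonal (both fixing exactly the endpoints of their compact intervals) are
conjugate via a decreasing homeomorphism. -/
theorem stmt_5
    (f g : ℝ → ℝ) (xL xR xbL xbR : ℝ)
    (hI : xL < xR) (hJ : xbL < xbR)
    (hgc : ContinuousOn g (Icc xL xR)) (hgm : StrictMonoOn g (Icc xL xR))
    (hgB : BijOn g (Icc xL xR) (Icc xL xR))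
    (hfc : ContinuousOn f (Icc xbL xbR)) (hfm : StrictMonoOn f (Icc xbL xbR))
    (hfB : BijOn f (Icc xbL xbR) (Icc xbL xbR))
    (hgd : ∀ x ∈ Ioo xL xR, g x < x)
    (hfd : ∀ x ∈ Ioo xbL xbR, x < f x)
    (hgfix : ∀ x ∈ Icc xL xR, g x = x ↔ x = xL ∨ x = xR)
    (hffix : ∀ x ∈ Icc xbL xbR, f x = x ↔ x = xbL ∨ x = xbR) :
    ∃ h : ℝ → ℝ, ContinuousOn h (Icc xbL xbR) ∧ StrictAntiOn h (Icc xbL xbR) ∧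
      BijOn h (Icc xbL xbR) (Icc xL xR) ∧
      ∀ x ∈ Icc xbL xbR, g (h x) = h (f x) :=
  stmt_5_general f g xL xR xbL xbR hI hJ hgm hgB hfm hfB hgd hfd
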